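/- In the Scheme II array from a t-(v,k,λ) design, every row contains the same number of stars, namely λ·C(v,t)·C(k,i+1)/C(k,t) · (1 − (i+1)/C(v,i)); equivalently, the number of non-star entries in each row equals λ·C(v−i,t−i)·(k−i)/C(k−i,t−i). -/

import Mathlib

open Finset

lemma card_supersets {V : Type*} [DecidableEq V] {s X0 : Finset V} (h : X0 ⊆ s)
    {n : ℕ} (hn : X0.card ≤ n) :
    ((s.powersetCard n).filter (fun Y => X0 ⊆ Y)).card
      = (s.card - X0.card).choose (n - X0.card) := by
  rw [← Finset.card_sdiff_of_subset h, ← Finset.card_powersetCard]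
  apply Finset.card_bij' (fun Y _ => Y \ X0) (fun Z _ => Z ∪ X0)
  · intro Y hY
    simp only [mem_filter, mem_powersetCard] at hY
    simp only [mem_powersetCard]
    exact ⟨sdiff_subset_sdiff hY.1.1 le_rfl, by rw [card_sdiff_of_subset hY.2, hY.1.2]⟩
  · intro Z hZ
    simp only [mem_powersetCard] at hZ
    simp only [mem_filter, mem_powersetCard]
    have hZX : Disjoint Z X0 := disjoint_of_subset_left hZ.1 Finset.sdiff_disjoint
    refine ⟨⟨union_subset (hZ.1.trans (sdiff_subset)) h, ?_⟩, subset_union_right⟩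
    rw [card_union_of_disjoint hZX, hZ.2]
    omega
  · intro Y hY
    simp only [mem_filter, mem_powersetCard] at hY
    exact sdiff_union_of_subset hY.2
  · intro Z hZ
    simp only [mem_powersetCard] at hZ
    have hZX : Disjoint Z X0 := disjoint_of_subset_left hZ.1 Finset.sdiff_disjoint
    rw [union_sdiff_right, sdiff_eq_self_of_disjoint hZX]

/-- Constant row star count in the Scheme II array: for every row `X0` (an
`i`-subset of the point set), the number of non-star columns `(a,Y)` (those
with `X0 ⊆ Y`) is exactly `λ_i·(k−i) = λ·C(v−i,t−i)·(k−i)/C(k−i,t−i)`;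
equivalently (as rationals) the star count per row is
`K·(1 − (i+1)/C(v,i))` where `K = b·C(k,i+1)` is the number of columns. -/
theorem schemeII_row_star_count {V : Type*} [Fintype V] [DecidableEq V]
    (v k t lam i b li : ℕ) (blocks : Fin b → Finset V)
    (hv : Fintype.card V = v) (hkv : k < v) (htk : t ≤ k) (ht : 1 ≤ t)
    (hlam : 1 ≤ lam) (hi1 : 1 ≤ i) (hit : i + 1 ≤ t)
    (hcard : ∀ a, (blocks a).card = k)
    (hdes : ∀ T : Finset V, T.card = t →
      (Finset.univ.filter fun a => T ⊆ blocks a).card = lam)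
    (hb : b * Nat.choose k t = lam * Nat.choose v t)
    (hli : li * Nat.choose (k - i) (t - i) = lam * Nat.choose (v - i) (t - i)) :
    (∀ X0 : Finset V, X0.card = i →
      (Finset.univ.filter
        (fun c : (a : Fin b) × {Y : Finset V // Y ⊆ blocks a ∧ Y.card = i + 1} =>
          X0 ⊆ c.2.1)).card = li * (k - i)) ∧
    ((b * Nat.choose k (i + 1) : ℕ) : ℚ) * (1 - ((i : ℚ) + 1) / (Nat.choose v i : ℚ))
      = ((b * Nat.choose k (i + 1) : ℕ) : ℚ) - ((li * (k - i) : ℕ) : ℚ) := by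
  have hik : i ≤ k := le_trans (by omega) htk
  have hchoosepos : 0 < Nat.choose (k - i) (t - i) := Nat.choose_pos (by omega)
  constructor
  · intro X0 hX0
    -- number of blocks containing X0 is li
    have hScard : (Finset.univ.filter fun a : Fin b => X0 ⊆ blocks a).card = li := by
      set S := Finset.univ.filter fun a : Fin b => X0 ⊆ blocks a with hS
      set W := (Finset.univ.powersetCard t).filter (fun T : Finset V => X0 ⊆ T) with hW
      have hWcard : W.card = Nat.choose (v - i) (t - i) := by
        rw [hW, card_supersets (subset_univ X0) (by omega)]
        rw [card_univ, hv, hX0]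
      -- double counting N
      have hcount : ∀ a : Fin b,
          (((blocks a).powersetCard t).filter (fun T => X0 ⊆ T)).card
            = (W.filter (fun T => T ⊆ blocks a)).card := by
        intro a
        congr 1
        ext T
        simp only [hW, mem_filter, mem_powersetCard]
        constructor
        · rintro ⟨⟨h1, h2⟩, h3⟩; exact ⟨⟨⟨subset_univ T, h2⟩, h3⟩, h1⟩
        · rintro ⟨⟨⟨_, h2⟩, h3⟩, h1⟩; exact ⟨⟨h1, h2⟩, h3⟩
      have hN1 : ∑ a : Fin b, (((blocks a).powersetCard t).filter (fun T => X0 ⊆ T)).card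
          = S.card * Nat.choose (k - i) (t - i) := by
        have : ∀ a : Fin b, (((blocks a).powersetCard t).filter (fun T => X0 ⊆ T)).card
            = if X0 ⊆ blocks a then Nat.choose (k - i) (t - i) else 0 := by
          intro a
          by_cases h : X0 ⊆ blocks a
          · rw [if_pos h, card_supersets h (by omega), hcard a, hX0]
          · rw [if_neg h, Finset.card_eq_zero, Finset.filter_eq_empty_iff]
            intro T hT
            simp only [mem_powersetCard] at hT
            exact fun hc => h (hc.trans hT.1)
        simp_rw [this]
        rw [← Finset.sum_filter, Finset.sum_const, smul_eq_mul]
      have hN2 : ∑ a : Fin b, (((blocks a).powersetCard t).filter (fun T => X0 ⊆ T)).card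
          = lam * Nat.choose (v - i) (t - i) := by
        simp_rw [hcount]
        have : ∀ a : Fin b, (W.filter (fun T => T ⊆ blocks a)).card
            = ∑ T ∈ W, if T ⊆ blocks a then 1 else 0 := by
          intro a; rw [← Finset.sum_filter, Finset.sum_const, smul_eq_mul, mul_one]
        simp_rw [this]
        rw [Finset.sum_comm]
        have : ∀ T ∈ W, (∑ a : Fin b, if T ⊆ blocks a then 1 else 0) = lam := by
          intro T hT
          rw [← Finset.sum_filter, Finset.sum_const, smul_eq_mul, mul_one]
          apply hdes
          simp only [hW, mem_filter, mem_powersetCard] at hT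
          exact hT.1.2
        rw [Finset.sum_congr rfl this, Finset.sum_const, smul_eq_mul, hWcard, mul_comm]
      have : S.card * Nat.choose (k - i) (t - i) = li * Nat.choose (k - i) (t - i) := by
        rw [← hN1, hN2, ← hli]
      exact Nat.eq_of_mul_eq_mul_right hchoosepos this
    -- now the sigma count
    have hsplit : (Finset.univ.filter
        (fun c : (a : Fin b) × {Y : Finset V // Y ⊆ blocks a ∧ Y.card = i + 1} =>
          X0 ⊆ c.2.1))
        = Finset.univ.sigma (fun a : Fin b =>
            Finset.univ.filter (fun Y : {Y : Finset V // Y ⊆ blocks a ∧ Y.card = i + 1} =>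
              X0 ⊆ Y.1)) := by
      ext ⟨a, Y⟩
      simp [Finset.mem_sigma]
    rw [hsplit, Finset.card_sigma]
    have hinner : ∀ a : Fin b,
        (Finset.univ.filter (fun Y : {Y : Finset V // Y ⊆ blocks a ∧ Y.card = i + 1} =>
          X0 ⊆ Y.1)).card
        = (((blocks a).powersetCard (i + 1)).filter (fun Y => X0 ⊆ Y)).card := by
      intro a
      rw [← Fintype.card_subtype, ← Fintype.card_coe]
      apply Fintype.card_congr
      exact
        { toFun := fun Y => ⟨Y.1.1, by
            simp only [mem_filter, mem_powersetCard]
            exact ⟨⟨Y.1.2.1, Y.1.2.2⟩, Y.2⟩⟩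
          invFun := fun Z => ⟨⟨Z.1, by
            have := Z.2
            simp only [mem_filter, mem_powersetCard] at this
            exact ⟨this.1.1, this.1.2⟩⟩, by
            have := Z.2
            simp only [mem_filter, mem_powersetCard] at this
            exact this.2⟩
          left_inv := fun _ => rfl
          right_inv := fun _ => rfl }
    have hval : ∀ a : Fin b,
        (((blocks a).powersetCard (i + 1)).filter (fun Y => X0 ⊆ Y)).card
          = if X0 ⊆ blocks a then k - i else 0 := by
      intro a
      by_cases h : X0 ⊆ blocks a
      · rw [if_pos h, card_supersets h (by omega), hcard a, hX0]
        simp [Nat.choose_one_right]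
      · rw [if_neg h, Finset.card_eq_zero, Finset.filter_eq_empty_iff]
        intro Y hY
        simp only [mem_powersetCard] at hY
        exact fun hc => h (hc.trans hY.1)
    simp_rw [hinner, hval]
    rw [← Finset.sum_filter, Finset.sum_const, smul_eq_mul, hScard]
  · -- rational identity
    have hKI : b * Nat.choose k i = li * Nat.choose v i := by
      have h1 : Nat.choose k t * Nat.choose t i
          = Nat.choose k i * Nat.choose (k - i) (t - i) :=
        Nat.choose_mul (by omega)
      have h2 : Nat.choose v t * Nat.choose t i
          = Nat.choose v i * Nat.choose (v - i) (t - i) :=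
        Nat.choose_mul (by omega)
      apply Nat.eq_of_mul_eq_mul_right hchoosepos
      calc b * Nat.choose k i * Nat.choose (k - i) (t - i)
          = b * (Nat.choose k i * Nat.choose (k - i) (t - i)) := by ring
        _ = b * (Nat.choose k t * Nat.choose t i) := by rw [h1]
        _ = (b * Nat.choose k t) * Nat.choose t i := by ring
        _ = (lam * Nat.choose v t) * Nat.choose t i := by rw [hb]
        _ = lam * (Nat.choose v t * Nat.choose t i) := by ring
        _ = lam * (Nat.choose v i * Nat.choose (v - i) (t - i)) := by rw [h2]
        _ = (lam * Nat.choose (v - i) (t - i)) * Nat.choose v i := by ring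
        _ = (li * Nat.choose (k - i) (t - i)) * Nat.choose v i := by rw [hli]
        _ = li * Nat.choose v i * Nat.choose (k - i) (t - i) := by ring
    have hnat : b * Nat.choose k (i + 1) * (i + 1) = li * (k - i) * Nat.choose v i := by
      calc b * Nat.choose k (i + 1) * (i + 1)
          = b * (Nat.choose k (i + 1) * (i + 1)) := by ring
        _ = b * (Nat.choose k i * (k - i)) := by rw [Nat.choose_succ_right_eq]
        _ = (b * Nat.choose k i) * (k - i) := by ring
        _ = (li * Nat.choose v i) * (k - i) := by rw [hKI]
        _ = li * (k - i) * Nat.choose v i := by ring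
    have hCpos : 0 < Nat.choose v i := Nat.choose_pos (by omega)
    have hC : ((Nat.choose v i : ℕ) : ℚ) ≠ 0 := by
      exact_mod_cast hCpos.ne'
    have hQ : (b : ℚ) * (Nat.choose k (i + 1) : ℚ) * ((i : ℚ) + 1)
        = (li : ℚ) * ((k : ℚ) - (i : ℚ)) * (Nat.choose v i : ℚ) := by
      have := congrArg (fun n : ℕ => (n : ℚ)) hnat
      push_cast [Nat.cast_sub hik] at this
      linarith [this]
    push_cast [Nat.cast_sub hik]
    field_simp
    ring_nf
    ring_nf at hQ
    linarith [hQ]
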